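/- On the jet space M(m,1), every variation of the contact module Ω(m,1) is of the form Z = z D + Σ_{j,s} D^s p^j · ∂/∂ω^j_s for arbitrary functions z, p^1,…,p^m of finitely many jet coordinates; that is, a vector field Z satisfies L_Z Ω(m,1) ⊆ Ω(m,1) if and only if, writing Z = z D + Σ z^j_s ∂/∂w^j_s with Zx = z and z^j_s = ω^j_s(Z), the coefficients satisfy z^j_s = D^s z^j_0 (so z^j_{s+1} = D z^j_s). -/

import Mathlib

/-!
STATEMENT 12: On M(m,1), every variation of Ω(m,1) is
Z = z D + Σ D^s p^j ∂/∂ω^j_s: a vector field Z satisfies L_Z Ω(m,1) ⊆ Ω(m,1)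
iff, writing Z = z D + Σ z^j_s ∂/∂w^j_s with z = Zx and z^j_s = ω^j_s(Z),
the coefficients satisfy z^j_{s+1} = D z^j_s.
-/

namespace Stmt12

/-- Points of the infinite jet space M(m,1): the value of x and of the
coordinates w^j_r. -/
abbrev J (m : ℕ) : Type := ℝ × (Fin m → ℕ → ℝ)

/-- Functions on the jet space. -/
abbrev C (m : ℕ) : Type := J m → ℝ

/-- Partial derivative with respect to x. -/
noncomputable def pderivx {m : ℕ} (f : C m) (p : J m) : ℝ :=
  deriv (fun t => f (t, p.2)) p.1

/-- Partial derivative with respect to w^j_r. -/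
noncomputable def pderivw {m : ℕ} (j : Fin m) (r : ℕ) (f : C m) (p : J m) : ℝ :=
  deriv (fun t => f (p.1, Function.update p.2 j (Function.update (p.2 j) r t))) (p.2 j r)

/-- A vector field z ∂/∂x + Σ z^j_r ∂/∂w^j_r given by its components. -/
abbrev Vec (m : ℕ) : Type := C m × (Fin m → ℕ → C m)

/-- A 1-form a dx + Σ b^j_r dw^j_r given by its components. -/
abbrev Form (m : ℕ) : Type := C m × (Fin m → ℕ → C m)

/-- Application of a vector field to a function. -/
noncomputable def vApply {m : ℕ} (Z : Vec m) (f : C m) : C m := fun p =>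
  Z.1 p * pderivx f p + ∑' jr : Fin m × ℕ, Z.2 jr.1 jr.2 p * pderivw jr.1 jr.2 f p

/-- The total derivative D = ∂/∂x + Σ w^j_{r+1} ∂/∂w^j_r. -/
noncomputable def Dvec {m : ℕ} : Vec m :=
  (fun _ => 1, fun j r p => p.2 j (r + 1))

/-- The contact form ω^j_r = dw^j_r − w^j_{r+1} dx. -/
noncomputable def contact {m : ℕ} (j : Fin m) (r : ℕ) : Form m :=
  (fun p => -(p.2 j (r + 1)), fun j' r' _ => if j' = j ∧ r' = r then 1 else 0)

/-- Lie derivative of a 1-form along a vector field, componentwise: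
(L_Z ω)_c = Z(ω_c) + Σ_k ω_k ∂_c(z_k). -/
noncomputable def lieD {m : ℕ} (Z : Vec m) (ω : Form m) : Form m :=
  (fun p => vApply Z ω.1 p + ω.1 p * pderivx Z.1 p
      + ∑' jr : Fin m × ℕ, ω.2 jr.1 jr.2 p * pderivx (Z.2 jr.1 jr.2) p,
   fun j r p => vApply Z (ω.2 j r) p + ω.1 p * pderivw j r Z.1 p
      + ∑' jr : Fin m × ℕ, ω.2 jr.1 jr.2 p * pderivw j r (Z.2 jr.1 jr.2) p)

/-- Pullback of a 1-form under a map of the jet space,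
φ*(Σ a_k dh_k) = Σ (a_k ∘ φ) d(h_k ∘ φ). -/
noncomputable def pullback {m : ℕ} (φ : J m → J m) (ω : Form m) : Form m :=
  (fun p => ω.1 (φ p) * pderivx (fun q => (φ q).1) p
      + ∑' jr : Fin m × ℕ, ω.2 jr.1 jr.2 (φ p) * pderivx (fun q => (φ q).2 jr.1 jr.2) p,
   fun j r p => ω.1 (φ p) * pderivw j r (fun q => (φ q).1) p
      + ∑' jr : Fin m × ℕ, ω.2 jr.1 jr.2 (φ p) * pderivw j r (fun q => (φ q).2 jr.1 jr.2) p)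

/-- Membership in the contact module Ω(m,1): a finite C-linear combination of
the contact forms ω^j_r. -/
def InContactModule {m : ℕ} (θ : Form m) : Prop :=
  ∃ (S : Finset (Fin m × ℕ)) (c : Fin m → ℕ → C m),
    θ = (fun p => ∑ jr ∈ S, c jr.1 jr.2 p * (contact jr.1 jr.2).1 p,
         fun j r p => ∑ jr ∈ S, c jr.1 jr.2 p * (contact jr.1 jr.2).2 j r p)

/-- The coordinate functions of the jet space M(m,1). -/
noncomputable def coordFun {m : ℕ} : (Unit ⊕ (Fin m × ℕ)) → C m :=
  Sum.elim (fun _ p => p.1) (fun jr p => p.2 jr.1 jr.2)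

/-- A function is admissible if it is a smooth function of finitely many
jet coordinates. -/
def Admissible {m : ℕ} (f : C m) : Prop :=
  ∃ (k : ℕ) (F : (Fin k → ℝ) → ℝ) (c : Fin k → Unit ⊕ (Fin m × ℕ)),
    ContDiff ℝ (⊤ : ℕ∞) F ∧ f = fun p => F (fun s => coordFun (c s) p)

/-- The contact component ω^j_s(Z) = z^j_s − w^j_{s+1}·z of a vector field Z. -/
noncomputable def contactComp {m : ℕ} (Z : Vec m) (j : Fin m) (s : ℕ) : C m :=
  fun p => Z.2 j s p - p.2 j (s + 1) * Z.1 p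

variable {m : ℕ}

/-! Auxiliary lemmas -/

lemma hasDerivAt_coordW (j : Fin m) (r : ℕ) (j' : Fin m) (r' : ℕ) (p : J m) :
    HasDerivAt (fun t => Function.update p.2 j' (Function.update (p.2 j') r' t) j r)
      (if j = j' ∧ r = r' then 1 else 0) (p.2 j' r') := by
  have h : (fun t => Function.update p.2 j' (Function.update (p.2 j') r' t) j r)
      = (fun t => if j = j' then (if r = r' then t else p.2 j' r) else p.2 j r) := by
    funext t
    by_cases hj : j = j' <;> by_cases hr : r = r' <;>
      simp [Function.update_apply, hj, hr]
  rw [h]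
  by_cases hj : j = j' <;> by_cases hr : r = r' <;>
    simp [hj, hr, hasDerivAt_const]
  subst hj hr; exact hasDerivAt_id _

lemma Admissible.hasDerivAt_sliceX {f : C m} (hf : Admissible f) (p : J m) :
    HasDerivAt (fun t => f (t, p.2)) (pderivx f p) p.1 := by
  obtain ⟨k, F, c, hF, rfl⟩ := hf
  have hd : DifferentiableAt ℝ (fun t : ℝ => F (fun s => coordFun (c s) (t, p.2))) p.1 := by
    apply DifferentiableAt.comp (𝕜 := ℝ)
      (g := F) (f := fun t (s : Fin k) => coordFun (c s) (t, p.2))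
    · exact (hF.differentiable (by simp) _)
    · apply differentiableAt_pi.2
      intro s
      rcases c s with u | v
      · exact differentiable_id.differentiableAt
      · exact (differentiable_const _).differentiableAt
  exact hd.hasDerivAt

lemma Admissible.hasDerivAt_sliceW {f : C m} (hf : Admissible f) (j : Fin m) (r : ℕ) (p : J m) :
    HasDerivAt (fun t => f (p.1, Function.update p.2 j (Function.update (p.2 j) r t)))
      (pderivw j r f p) (p.2 j r) := by
  obtain ⟨k, F, c, hF, rfl⟩ := hf
  have hd : DifferentiableAt ℝ
      (fun t : ℝ => F (fun s => coordFun (c s)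
        (p.1, Function.update p.2 j (Function.update (p.2 j) r t)))) (p.2 j r) := by
    apply DifferentiableAt.comp (𝕜 := ℝ) (g := F)
      (f := fun t (s : Fin k) => coordFun (c s)
        (p.1, Function.update p.2 j (Function.update (p.2 j) r t)))
    · exact (hF.differentiable (by simp) _)
    · apply differentiableAt_pi.2
      intro s
      rcases c s with u | v
      · exact (differentiable_const _).differentiableAt
      · exact (hasDerivAt_coordW v.1 v.2 j r p).differentiableAt
  exact hd.hasDerivAt

lemma pderivw_coord (j : Fin m) (r : ℕ) (j' : Fin m) (r' : ℕ) (p : J m) :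
    pderivw j' r' (fun q => q.2 j r) p = if j = j' ∧ r = r' then 1 else 0 :=
  (hasDerivAt_coordW j r j' r' p).deriv

lemma pderivx_coord (j : Fin m) (r : ℕ) (p : J m) :
    pderivx (fun q => q.2 j r) p = 0 := by
  simp [pderivx]

lemma Admissible.finsupp {f : C m} (hf : Admissible f) :
    ∃ T : Finset (Fin m × ℕ), ∀ u : Fin m × ℕ, u ∉ T → ∀ p, pderivw u.1 u.2 f p = 0 := by
  obtain ⟨k, F, c, hF, rfl⟩ := hf
  have hfin : (Sum.inr ⁻¹' Set.range c : Set (Fin m × ℕ)).Finite :=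
    (Set.finite_range c).preimage Sum.inr_injective.injOn
  refine ⟨hfin.toFinset, ?_⟩
  intro u hu p
  have hker : ∀ s, c s ≠ Sum.inr u := by
    intro s hs
    exact hu (hfin.mem_toFinset.2 ⟨s, hs⟩)
  have hconst : (fun t => F (fun s => coordFun (c s)
      (p.1, Function.update p.2 u.1 (Function.update (p.2 u.1) u.2 t))))
      = fun _ => F (fun s => coordFun (c s) (p.1, p.2)) := by
    funext t
    congr 1
    funext s
    rcases h : c s with _ | v
    · rfl
    · have hv : v ≠ u := fun h' => hker s (by rw [h, h'])
      have hv' : (v.1, v.2) ≠ (u.1, u.2) := by simpa using hv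
      show Function.update p.2 u.1 (Function.update (p.2 u.1) u.2 t) v.1 v.2 = p.2 v.1 v.2
      by_cases h1 : v.1 = u.1
      · have h2 : v.2 ≠ u.2 := fun h2 => hv' (by rw [h1, h2])
        simp [Function.update_apply, h1, h2]
      · simp [Function.update_apply, h1]
  unfold pderivw
  rw [show (fun t => F (fun s => coordFun (c s)
      (p.1, Function.update p.2 u.1 (Function.update (p.2 u.1) u.2 t)))) = _ from hconst]
  simp

/-! Components of the Lie derivative of a contact form -/

lemma lieD_contact_fst (Z : Vec m) (j : Fin m) (s : ℕ) (p : J m) :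
    (lieD Z (contact j s)).1 p
      = pderivx (Z.2 j s) p - Z.2 j (s + 1) p - p.2 j (s + 1) * pderivx Z.1 p := by
  have hva : vApply Z (contact j s).1 p = -(Z.2 j (s + 1) p) := by
    unfold vApply
    have h1 : pderivx (contact j s).1 p = 0 := by simp [contact, pderivx]
    have h2 : ∀ u : Fin m × ℕ, pderivw u.1 u.2 (contact j s).1 p
        = -(if j = u.1 ∧ s + 1 = u.2 then 1 else 0) :=
      fun u => ((hasDerivAt_coordW j (s + 1) u.1 u.2 p).neg).deriv
    have h3 : ∑' u : Fin m × ℕ, Z.2 u.1 u.2 p * pderivw u.1 u.2 (contact j s).1 p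
        = -(Z.2 j (s + 1) p) := by
      rw [tsum_eq_single ((j, s + 1) : Fin m × ℕ)]
      · rw [h2]; simp
      · intro u hu
        rw [h2]
        have hne : ¬(j = u.1 ∧ s + 1 = u.2) := by
          rintro ⟨ha, hb⟩
          exact hu (Prod.ext_iff.2 ⟨ha.symm, hb.symm⟩)
        simp [hne]
    rw [h1, h3]; ring
  have h4 : ∑' u : Fin m × ℕ, (contact j s).2 u.1 u.2 p * pderivx (Z.2 u.1 u.2) p
      = pderivx (Z.2 j s) p := by
    rw [tsum_eq_single ((j, s) : Fin m × ℕ)]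
    · simp [contact]
    · intro u hu
      have hne : ¬(u.1 = j ∧ u.2 = s) := by
        rintro ⟨ha, hb⟩
        exact hu (Prod.ext_iff.2 ⟨ha, hb⟩)
      simp [contact, hne]
  show vApply Z (contact j s).1 p + (contact j s).1 p * pderivx Z.1 p
      + ∑' u : Fin m × ℕ, (contact j s).2 u.1 u.2 p * pderivx (Z.2 u.1 u.2) p = _
  rw [hva, h4]
  show -(Z.2 j (s + 1) p) + -(p.2 j (s + 1)) * pderivx Z.1 p + pderivx (Z.2 j s) p = _
  ring

lemma lieD_contact_snd (Z : Vec m) (j : Fin m) (s : ℕ) (j' : Fin m) (r' : ℕ) (p : J m) :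
    (lieD Z (contact j s)).2 j' r' p
      = pderivw j' r' (Z.2 j s) p - p.2 j (s + 1) * pderivw j' r' Z.1 p := by
  have hva : vApply Z ((contact j s).2 j' r') p = 0 := by
    unfold vApply
    have h1 : pderivx ((contact j s).2 j' r') p = 0 := by simp [contact, pderivx]
    have h2 : ∀ u : Fin m × ℕ, pderivw u.1 u.2 ((contact j s).2 j' r') p = 0 := by
      intro u; simp [contact, pderivw]
    simp [h1, h2]
  have h4 : ∑' u : Fin m × ℕ, (contact j s).2 u.1 u.2 p * pderivw j' r' (Z.2 u.1 u.2) p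
      = pderivw j' r' (Z.2 j s) p := by
    rw [tsum_eq_single ((j, s) : Fin m × ℕ)]
    · simp [contact]
    · intro u hu
      have hne : ¬(u.1 = j ∧ u.2 = s) := by
        rintro ⟨ha, hb⟩
        exact hu (Prod.ext_iff.2 ⟨ha, hb⟩)
      simp [contact, hne]
  show vApply Z ((contact j s).2 j' r') p + (contact j s).1 p * pderivw j' r' Z.1 p
      + ∑' u : Fin m × ℕ, (contact j s).2 u.1 u.2 p * pderivw j' r' (Z.2 u.1 u.2) p = _
  rw [hva, h4]
  show 0 + -(p.2 j (s + 1)) * pderivw j' r' Z.1 p + pderivw j' r' (Z.2 j s) p = _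
  ring

/-! Derivatives of the contact component -/

lemma pderivx_cc (Z : Vec m) (hx : Admissible Z.1) (hw : ∀ j s, Admissible (Z.2 j s))
    (j : Fin m) (s : ℕ) (p : J m) :
    pderivx (contactComp Z j s) p
      = pderivx (Z.2 j s) p - p.2 j (s + 1) * pderivx Z.1 p := by
  have h := (((hw j s).hasDerivAt_sliceX p).sub
    ((hasDerivAt_const p.1 (p.2 j (s + 1))).mul (hx.hasDerivAt_sliceX p))).deriv
  have he : pderivx (contactComp Z j s) p
      = deriv (fun t => Z.2 j s (t, p.2) - p.2 j (s + 1) * Z.1 (t, p.2)) p.1 := rfl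
  rw [he]; refine h.trans ?_; ring

lemma pderivw_cc (Z : Vec m) (hx : Admissible Z.1) (hw : ∀ j s, Admissible (Z.2 j s))
    (j : Fin m) (s : ℕ) (j' : Fin m) (r' : ℕ) (p : J m) :
    pderivw j' r' (contactComp Z j s) p
      = pderivw j' r' (Z.2 j s) p
        - ((if j = j' ∧ s + 1 = r' then 1 else 0) * Z.1 p
            + p.2 j (s + 1) * pderivw j' r' Z.1 p) := by
  have h := (((hw j s).hasDerivAt_sliceW j' r' p).sub
    ((hasDerivAt_coordW j (s + 1) j' r' p).mul (hx.hasDerivAt_sliceW j' r' p))).deriv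
  have he : pderivw j' r' (contactComp Z j s) p
      = deriv (fun t => Z.2 j s (p.1, Function.update p.2 j' (Function.update (p.2 j') r' t))
          - Function.update p.2 j' (Function.update (p.2 j') r' t) j (s + 1)
            * Z.1 (p.1, Function.update p.2 j' (Function.update (p.2 j') r' t)))
          (p.2 j' r') := rfl
  rw [he]; refine h.trans ?_
  simp [Function.update_eq_self]

/-! The key identity -/

lemma key (Z : Vec m) (hx : Admissible Z.1) (hw : ∀ j s, Admissible (Z.2 j s))
    (j : Fin m) (s : ℕ) :
    ∃ T : Finset (Fin m × ℕ),
      (∀ u : Fin m × ℕ, u ∉ T → ∀ p, (lieD Z (contact j s)).2 u.1 u.2 p = 0) ∧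
      ∀ p : J m,
        (lieD Z (contact j s)).1 p
          + ∑' u : Fin m × ℕ, p.2 u.1 (u.2 + 1) * (lieD Z (contact j s)).2 u.1 u.2 p
        = vApply Dvec (contactComp Z j s) p - contactComp Z j (s + 1) p := by
  obtain ⟨Tz, hTz⟩ := hx.finsupp
  obtain ⟨Tjs, hTjs⟩ := (hw j s).finsupp
  refine ⟨insert (j, s + 1) (Tz ∪ Tjs), ?_, ?_⟩
  · intro u hu p
    have h1 : u ∉ Tz := fun h => hu (Finset.mem_insert_of_mem (Finset.mem_union_left _ h))
    have h2 : u ∉ Tjs := fun h => hu (Finset.mem_insert_of_mem (Finset.mem_union_right _ h))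
    rw [lieD_contact_snd, hTz u h1, hTjs u h2]; ring
  · intro p
    set T : Finset (Fin m × ℕ) := insert (j, s + 1) (Tz ∪ Tjs) with hT
    have hsupp : ∀ u : Fin m × ℕ, u ∉ T → ∀ q, (lieD Z (contact j s)).2 u.1 u.2 q = 0 := by
      intro u hu q
      have h1 : u ∉ Tz := fun h => hu (Finset.mem_insert_of_mem (Finset.mem_union_left _ h))
      have h2 : u ∉ Tjs := fun h => hu (Finset.mem_insert_of_mem (Finset.mem_union_right _ h))
      rw [lieD_contact_snd, hTz u h1, hTjs u h2]; ring
    have ht1 : ∑' u : Fin m × ℕ, p.2 u.1 (u.2 + 1) * (lieD Z (contact j s)).2 u.1 u.2 p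
        = ∑ u ∈ T, p.2 u.1 (u.2 + 1) * (lieD Z (contact j s)).2 u.1 u.2 p := by
      apply tsum_eq_sum
      intro u hu
      rw [hsupp u hu]; ring
    have hD : vApply Dvec (contactComp Z j s) p
        = pderivx (contactComp Z j s) p
          + ∑ u ∈ T, p.2 u.1 (u.2 + 1) * pderivw u.1 u.2 (contactComp Z j s) p := by
      unfold vApply Dvec
      have ht2 : ∑' u : Fin m × ℕ, p.2 u.1 (u.2 + 1) * pderivw u.1 u.2 (contactComp Z j s) p
          = ∑ u ∈ T, p.2 u.1 (u.2 + 1) * pderivw u.1 u.2 (contactComp Z j s) p := by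
        apply tsum_eq_sum
        intro u hu
        have h1 : u ∉ Tz := fun h => hu (Finset.mem_insert_of_mem (Finset.mem_union_left _ h))
        have h2 : u ∉ Tjs := fun h => hu (Finset.mem_insert_of_mem (Finset.mem_union_right _ h))
        have h3 : ¬(j = u.1 ∧ s + 1 = u.2) := by
          rintro ⟨ha, hb⟩
          have he : u = ((j, s + 1) : Fin m × ℕ) := Prod.ext_iff.2 ⟨ha.symm, hb.symm⟩
          exact hu (by rw [hT, he]; exact Finset.mem_insert_self _ _)
        rw [pderivw_cc Z hx hw, hTz u h1, hTjs u h2]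
        simp [h3]
      rw [ht2]; ring
    have hsum : ∑ u ∈ T, p.2 u.1 (u.2 + 1) * pderivw u.1 u.2 (contactComp Z j s) p
        = ∑ u ∈ T, p.2 u.1 (u.2 + 1) * (lieD Z (contact j s)).2 u.1 u.2 p
          - p.2 j (s + 1 + 1) * Z.1 p := by
      have e1 : ∀ u ∈ T, p.2 u.1 (u.2 + 1) * pderivw u.1 u.2 (contactComp Z j s) p
          = p.2 u.1 (u.2 + 1) * (lieD Z (contact j s)).2 u.1 u.2 p
            - (if ((j, s + 1) : Fin m × ℕ) = u then p.2 u.1 (u.2 + 1) * Z.1 p else 0) := by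
        intro u _
        rw [pderivw_cc Z hx hw, lieD_contact_snd]
        by_cases h : j = u.1 ∧ s + 1 = u.2
        · have h' : ((j, s + 1) : Fin m × ℕ) = u := Prod.ext_iff.2 ⟨h.1, h.2⟩
          rw [if_pos h, if_pos h']; ring
        · have h' : ((j, s + 1) : Fin m × ℕ) ≠ u := by
            intro he; exact h ⟨by rw [← he], by rw [← he]⟩
          rw [if_neg h, if_neg h']; ring
      rw [Finset.sum_congr rfl e1, Finset.sum_sub_distrib]
      have e2 : ∑ u ∈ T, (if ((j, s + 1) : Fin m × ℕ) = u then p.2 u.1 (u.2 + 1) * Z.1 p else 0)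
          = p.2 j (s + 1 + 1) * Z.1 p := by
        rw [Finset.sum_ite_eq]
        simp [hT]
      rw [e2]
    rw [ht1, hD, hsum, lieD_contact_fst, pderivx_cc Z hx hw]
    unfold contactComp
    ring


theorem variation_structure (m : ℕ) (Z : Vec m)
    (hx : Admissible Z.1) (hw : ∀ j s, Admissible (Z.2 j s)) :
    (∀ (j : Fin m) (s : ℕ), InContactModule (lieD Z (contact j s))) ↔
      (∀ (j : Fin m) (s : ℕ),
        contactComp Z j (s + 1) = vApply Dvec (contactComp Z j s)) := by
  constructor
  · intro H j s
    obtain ⟨T, hsupp, hval⟩ := key Z hx hw j s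
    obtain ⟨S, c, hC⟩ := H j s
    funext p
    have h1 : (lieD Z (contact j s)).1 p
        = ∑ v ∈ S, c v.1 v.2 p * (-(p.2 v.1 (v.2 + 1))) := by
      rw [hC]; rfl
    have h2 : ∀ u : Fin m × ℕ, (lieD Z (contact j s)).2 u.1 u.2 p
        = if u ∈ S then c u.1 u.2 p else 0 := by
      intro u
      rw [hC]
      show (∑ v ∈ S, c v.1 v.2 p * (contact v.1 v.2).2 u.1 u.2 p) = _
      have e : ∀ v ∈ S, c v.1 v.2 p * (contact v.1 v.2).2 u.1 u.2 p
          = if u = v then c v.1 v.2 p else 0 := by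
        intro v _
        show c v.1 v.2 p * (if u.1 = v.1 ∧ u.2 = v.2 then 1 else 0) = _
        by_cases h : u = v
        · have hc : u.1 = v.1 ∧ u.2 = v.2 := ⟨by rw [h], by rw [h]⟩
          rw [if_pos hc, if_pos h]; ring
        · have hc : ¬(u.1 = v.1 ∧ u.2 = v.2) := by
            rintro ⟨ha, hb⟩
            exact h (Prod.ext_iff.2 ⟨ha, hb⟩)
          rw [if_neg hc, if_neg h]; ring
      rw [Finset.sum_congr rfl e, Finset.sum_ite_eq]
    have h3 : ∑' u : Fin m × ℕ, p.2 u.1 (u.2 + 1) * (lieD Z (contact j s)).2 u.1 u.2 p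
        = ∑ u ∈ S, p.2 u.1 (u.2 + 1) * c u.1 u.2 p := by
      rw [tsum_eq_sum (s := S) (by intro u hu; rw [h2]; simp [hu])]
      exact Finset.sum_congr rfl (fun u hu => by rw [h2]; simp [hu])
    have h4 : (lieD Z (contact j s)).1 p
        = -∑ u ∈ S, p.2 u.1 (u.2 + 1) * c u.1 u.2 p := by
      rw [h1, ← Finset.sum_neg_distrib]
      exact Finset.sum_congr rfl (fun u _ => by ring)
    have := hval p
    rw [h3, h4] at this
    have h5 : vApply Dvec (contactComp Z j s) p - contactComp Z j (s + 1) p = 0 := by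
      rw [← this]; ring
    linarith
  · intro H j s
    obtain ⟨T, hsupp, hval⟩ := key Z hx hw j s
    refine ⟨T, fun j' r' => (lieD Z (contact j s)).2 j' r', ?_⟩
    have ht : ∀ p, ∑' u : Fin m × ℕ, p.2 u.1 (u.2 + 1) * (lieD Z (contact j s)).2 u.1 u.2 p
        = ∑ u ∈ T, p.2 u.1 (u.2 + 1) * (lieD Z (contact j s)).2 u.1 u.2 p := by
      intro p
      apply tsum_eq_sum
      intro u hu
      rw [hsupp u hu p]; ring
    apply Prod.ext
    · funext p
      have := hval p
      rw [H j s, ht p] at this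
      have h0 : (lieD Z (contact j s)).1 p
          = -∑ u ∈ T, p.2 u.1 (u.2 + 1) * (lieD Z (contact j s)).2 u.1 u.2 p := by
        linarith
      show (lieD Z (contact j s)).1 p
          = ∑ v ∈ T, (lieD Z (contact j s)).2 v.1 v.2 p * (contact v.1 v.2).1 p
      rw [h0, ← Finset.sum_neg_distrib]
      exact Finset.sum_congr rfl (fun v _ => by show _ = _ * (-(p.2 v.1 (v.2 + 1))); ring)
    · funext j' r' p
      show (lieD Z (contact j s)).2 j' r' p
          = ∑ v ∈ T, (lieD Z (contact j s)).2 v.1 v.2 p * (contact v.1 v.2).2 j' r' p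
      have e : ∀ v ∈ T, (lieD Z (contact j s)).2 v.1 v.2 p * (contact v.1 v.2).2 j' r' p
          = if ((j', r') : Fin m × ℕ) = v then (lieD Z (contact j s)).2 v.1 v.2 p else 0 := by
        intro v _
        show (lieD Z (contact j s)).2 v.1 v.2 p * (if j' = v.1 ∧ r' = v.2 then 1 else 0) = _
        by_cases h : ((j', r') : Fin m × ℕ) = v
        · have hc : j' = v.1 ∧ r' = v.2 := ⟨by rw [← h], by rw [← h]⟩
          rw [if_pos hc, if_pos h]; ring
        · have hc : ¬(j' = v.1 ∧ r' = v.2) := by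
            rintro ⟨ha, hb⟩
            exact h (Prod.ext_iff.2 ⟨ha, hb⟩)
          rw [if_neg hc, if_neg h]; ring
      rw [Finset.sum_congr rfl e, Finset.sum_ite_eq]
      by_cases h : ((j', r') : Fin m × ℕ) ∈ T
      · simp [h]
      · simp [h, hsupp _ h p]

end Stmt12
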